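/- arXiv:1501.06752 — 3 statements merged into one kernel-verified Lean document; each statement's English description precedes it below -/
import Mathlib

section
/- (Hata's lemma on irrationality measure from linear forms.) Let α be an irrational real number, let σ, τ > 0, and let (p_n) and (q_n) be sequences of integers with l_n = q_n·α + p_n. If lim_{n→∞} (1/n)·ln|q_n| = σ and limsup_{n→∞} (1/n)·ln|l_n| ≤ −τ, then the irrationality measure of α satisfies μ(α) ≤ 1 + σ/τ; that is, for every real κ > 1 + σ/τ, the inequality |α − p/q| < q^(−κ) has only finitely many solutions in integers p and positive integers q. -/
open Real Filter Topology

/-!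
Given `|α - a/b| < b^(-κ)`, take `n` just large enough that `b |l_n| < 1/2` and
`|l_n| < |q_n| |α - a/b|`. The second condition makes the integer
`b p_n + a q_n = b l_n - q_n (b α - a)` nonzero, so `1 ≤ b |l_n| + b |q_n| |α - a/b|`, hence
`1/2 < b e^{(σ+o(1))n} |α - a/b|`. Whichever of the two conditions determines `n`, taking logarithms
shows this is incompatible with `κ > 1 + σ/τ` once `b` is large. So the denominators are bounded,
and then so are the numerators.
-/

lemma eventually_abs_le_exp_mul {u : ℕ → ℝ} {s : ℝ}
    (h : ∀ᶠ n : ℕ in atTop, 1 / (n : ℝ) * log |u n| < s) :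
    ∀ᶠ n : ℕ in atTop, |u n| ≤ exp (s * n) := by
  filter_upwards [eventually_gt_atTop 0, h] with n hn h
  have hlog : log |u n| < s * n := by
    rwa [one_div, inv_mul_lt_iff₀ (by exact_mod_cast hn), mul_comm] at h
  exact (le_exp_log _).trans (exp_le_exp.mpr hlog.le)

lemma eventually_exp_mul_le_abs {u : ℕ → ℝ} {s : ℝ} (hs : 0 ≤ s)
    (h : ∀ᶠ n : ℕ in atTop, s < 1 / (n : ℝ) * log |u n|) :
    ∀ᶠ n : ℕ in atTop, exp (s * n) ≤ |u n| := by
  filter_upwards [eventually_gt_atTop 0, h] with n hn h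
  have hlog : s * n < log |u n| := by
    rwa [one_div, lt_inv_mul_iff₀ (by exact_mod_cast hn), mul_comm] at h
  have hu : 0 < |u n| := by
    refine (abs_nonneg (u n)).lt_of_ne fun h0 => ?_
    rw [← h0, log_zero] at hlog
    exact hlog.not_ge (by positivity)
  exact ((lt_log_iff_exp_lt hu).mp hlog).le

/-- On `ℝ` an unbounded sequence has junk `limsup` equal to `0`. -/
lemma isBoundedUnder_le_of_limsup_neg {ι : Type*} {f : Filter ι} {u : ι → ℝ}
    (h : limsup u f < 0) : IsBoundedUnder (· ≤ ·) f u := by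
  by_contra hu
  exact lt_irrefl (0 : ℝ) (Real.limsup_of_not_isBoundedUnder hu ▸ h)

lemma one_le_mul_abs_add_mul_abs_sub_div {α : ℝ} {P Q a : ℤ} {b : ℕ} (hb : 0 < b)
    (h : |Q * α + P| < |(Q : ℝ)| * |α - a / b|) :
    1 ≤ b * |Q * α + P| + b * |(Q : ℝ)| * |α - a / b| := by
  have hb' : (0 : ℝ) < b := by exact_mod_cast hb
  have hid : ((b * P + a * Q : ℤ) : ℝ) = b * (Q * α + P) - Q * (b * (α - a / b)) := by
    push_cast
    field_simp
    ring
  have hm : (b : ℤ) * P + a * Q ≠ 0 := by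
    intro h0
    rw [h0, Int.cast_zero, eq_comm, sub_eq_zero] at hid
    have hl : (Q * α + P : ℝ) = Q * (α - a / b) := mul_left_cancel₀ hb'.ne' (hid.trans (by ring))
    exact h.ne (by rw [hl, abs_mul])
  calc (1 : ℝ) ≤ |((b * P + a * Q : ℤ) : ℝ)| := by exact_mod_cast Int.one_le_abs hm
    _ ≤ |b * (Q * α + P)| + |Q * (b * (α - a / b))| := by rw [hid]; exact abs_sub _ _
    _ = b * |Q * α + P| + b * |(Q : ℝ)| * |α - a / b| := by
      rw [abs_mul, abs_mul, abs_mul, abs_of_pos hb']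
      ring

/-- Here `x`, `y` stand for `log b` and `-log |α - a/b|`, and `w` for the decay rate of
`l_n / q_n`. -/
lemma exists_bound_of_forall_index {κ s t w : ℝ} (c : ℝ) (N : ℕ) (hs : 0 ≤ s) (ht : 0 < t)
    (hκt : t + s < κ * t) (hκw : w < κ * (w - s)) :
    ∃ X, ∀ x y : ℝ, 0 ≤ x → κ * x < y →
      (∀ n : ℕ, N ≤ n → x + c < t * n → y < w * n → y < x + s * n + c) → x ≤ X := by
  have hκ : 1 < κ := by nlinarith
  have hw : 0 < w := by nlinarith
  have hws : 0 < w - s := by nlinarith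
  set C := s * (N + 2) + c
  refine ⟨max ((s * c + t * C) / (κ * t - t - s)) (w * C / (κ * (w - s) - w)), ?_⟩
  intro x y hx hxy hy
  set m := max ((x + c) / t) (y / w) with hm_def
  have hm : 0 ≤ m := le_max_of_le_right (div_nonneg (by nlinarith) hw.le)
  set n := N + ⌈m⌉₊ + 1 with hn_def
  have hmn : m < n := by
    rw [hn_def]; push_cast
    linarith [Nat.le_ceil m, (N.cast_nonneg : (0 : ℝ) ≤ N)]
  have hnm : (n : ℝ) ≤ N + 2 + m := by
    rw [hn_def]; push_cast
    linarith [Nat.ceil_lt_add_one hm]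
  have hyn := hy n (by omega)
    (by rw [← div_lt_iff₀' ht]; exact (le_max_left _ _).trans_lt hmn)
    (by rw [← div_lt_iff₀' hw]; exact (le_max_right _ _).trans_lt hmn)
  have hym : y < x + s * m + C := by linarith [mul_le_mul_of_nonneg_left hnm hs]
  rcases le_total ((x + c) / t) (y / w) with h | h
  · have hsm : w * (s * m) = s * y := by rw [hm_def, max_eq_right h]; field_simp
    refine le_max_of_le_right ((le_div_iff₀ (by linarith)).mpr ?_)
    linarith [mul_lt_mul_of_pos_left hym hw, mul_lt_mul_of_pos_left hxy hws]
  · have hsm : t * (s * m) = s * (x + c) := by rw [hm_def, max_eq_left h]; field_simp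
    refine le_max_of_le_left ((le_div_iff₀ (by linarith)).mpr ?_)
    linarith [mul_lt_mul_of_pos_left hym ht, mul_lt_mul_of_pos_left hxy ht]

lemma neg_log_abs_sub_div_lt {α s s' t : ℝ} {P Q a : ℤ} {b n : ℕ} (hb : 0 < b)
    (hδ : 0 < |α - a / b|) (hQ_le : |(Q : ℝ)| ≤ exp (s * n))
    (hQ_ge : exp (s' * n) ≤ |(Q : ℝ)|) (hl : |Q * α + P| ≤ exp (-t * n))
    (hn₁ : log b + log 2 < t * n) (hn₂ : -log |α - a / b| < (s' + t) * n) :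
    -log |α - a / b| < log b + s * n + log 2 := by
  set δ := |α - a / b|
  have hb' : (0 : ℝ) < b := by exact_mod_cast hb
  have hδ_gt : exp (-((s' + t) * n)) < δ := (lt_log_iff_exp_lt hδ).mp (by linarith)
  have hl_lt : |Q * α + P| < |(Q : ℝ)| * δ :=
    calc |Q * α + P| ≤ exp (s' * n) * exp (-((s' + t) * n)) := by
          rw [← exp_add]; convert hl using 2; ring
      _ < exp (s' * n) * δ := mul_lt_mul_of_pos_left hδ_gt (exp_pos _)
      _ ≤ |(Q : ℝ)| * δ := mul_le_mul_of_nonneg_right hQ_ge hδ.le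
  have hfirst : b * |Q * α + P| < 2⁻¹ :=
    calc b * |Q * α + P| ≤ exp (log b) * exp (-t * n) := by
          rw [exp_log hb']; exact mul_le_mul_of_nonneg_left hl hb'.le
      _ < exp (-log 2) := by rw [← exp_add]; exact exp_lt_exp.mpr (by linarith)
      _ = 2⁻¹ := by rw [exp_neg, exp_log two_pos]
  have hsecond : b * |(Q : ℝ)| * δ ≤ exp (log b + s * n + log δ) := by
    rw [exp_add, exp_add, exp_log hb', exp_log hδ]
    gcongr
  have := one_le_mul_abs_add_mul_abs_sub_div hb hl_lt
  have hexp : exp (-log 2) < exp (log b + s * n + log δ) := by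
    rw [exp_neg, exp_log two_pos]; linarith
  linarith [exp_lt_exp.mp hexp]

lemma exists_bound_of_abs_sub_div_lt_rpow {α κ s s' t : ℝ} (hα : Irrational α) {p q : ℕ → ℤ}
    (hq_le : ∀ᶠ n : ℕ in atTop, |(q n : ℝ)| ≤ exp (s * n))
    (hq_ge : ∀ᶠ n : ℕ in atTop, exp (s' * n) ≤ |(q n : ℝ)|)
    (hl : ∀ᶠ n : ℕ in atTop, |q n * α + p n| ≤ exp (-t * n))
    (hs : 0 ≤ s) (ht : 0 < t) (hκt : t + s < κ * t) (hκw : s' + t < κ * (s' + t - s)) :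
    ∃ B, ∀ (a : ℤ) (b : ℕ), 0 < b → |α - a / b| < (b : ℝ) ^ (-κ) → (b : ℝ) ≤ B := by
  obtain ⟨N, hN⟩ := eventually_atTop.mp (hq_le.and (hq_ge.and hl))
  obtain ⟨X, hX⟩ := exists_bound_of_forall_index (log 2) N hs ht hκt hκw
  refine ⟨exp X, fun a b hb hab => ?_⟩
  have hb' : (0 : ℝ) < b := by exact_mod_cast hb
  have hδ : 0 < |α - a / b| := by
    refine abs_pos.mpr (sub_ne_zero.mpr ?_)
    simpa using (irrational_iff_ne_rational α).mp hα a b (by exact_mod_cast hb.ne')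
  have hy : κ * log b < -log |α - a / b| := by
    have := log_lt_log hδ hab
    rw [log_rpow hb'] at this
    linarith
  rw [← exp_log hb']
  exact exp_le_exp.mpr <| hX _ _ (log_natCast_nonneg b) hy fun n hn h₁ h₂ =>
    neg_log_abs_sub_div_lt hb hδ (hN n hn).1 (hN n hn).2.1 (hN n hn).2.2 h₁ h₂

lemma finite_setOf_abs_sub_div_lt_one_and_le (α B : ℝ) :
    {pq : ℤ × ℕ+ | |α - pq.1 / ((pq.2 : ℕ) : ℝ)| < 1 ∧ ((pq.2 : ℕ) : ℝ) ≤ B}.Finite := by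
  set R := ⌈B * (|α| + 1)⌉
  refine ((Set.finite_Icc (-R) R).prod (Set.finite_Iic ⌊B⌋₊.succPNat)).subset ?_
  rintro ⟨a, b⟩ ⟨hab, hbB⟩
  have hb : (0 : ℝ) < (b : ℕ) := by exact_mod_cast b.pos
  have ha : |(a : ℝ)| ≤ B * (|α| + 1) :=
    calc |(a : ℝ)| = (b : ℕ) * |a / ((b : ℕ) : ℝ)| := by
          rw [abs_div, abs_of_pos hb]; field_simp
      _ ≤ B * (|α| + 1) := by
          gcongr
          · linarith
          · calc |a / ((b : ℕ) : ℝ)| = |α - (α - a / (b : ℕ))| := by ring_nf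
              _ ≤ |α| + 1 := (abs_sub _ _).trans (by linarith)
  refine ⟨abs_le.mp ?_, ?_⟩
  · exact_mod_cast ha.trans (Int.le_ceil _)
  · rw [Set.mem_Iic, ← PNat.coe_le_coe, Nat.succPNat_coe]
    exact (Nat.le_floor hbB).trans (Nat.le_succ _)

theorem hata_irrationality_measure (α : ℝ) (hα : Irrational α)
    (σ τ : ℝ) (hσ : 0 < σ) (hτ : 0 < τ)
    (p q : ℕ → ℤ) (l : ℕ → ℝ) (hl : ∀ n, l n = (q n : ℝ) * α + (p n : ℝ))
    (hq : Filter.Tendsto (fun n : ℕ => (1 / (n : ℝ)) * Real.log |(q n : ℝ)|)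
      Filter.atTop (nhds σ))
    (hlsup : Filter.limsup (fun n : ℕ => (1 / (n : ℝ)) * Real.log |l n|) Filter.atTop ≤ -τ) :
    ∀ κ : ℝ, κ > 1 + σ / τ →
      {pq : ℤ × ℕ+ | |α - (pq.1 : ℝ) / ((pq.2 : ℕ) : ℝ)| < ((pq.2 : ℕ) : ℝ) ^ (-κ)}.Finite := by
  intro κ hκ
  have hκτ : σ + τ < κ * τ := by
    have := (div_lt_iff₀ hτ).mp (show σ / τ < κ - 1 by linarith)
    linarith
  have hε : ∀ᶠ ε in 𝓝 (0 : ℝ), ε < σ ∧ ε < τ ∧ σ + τ < κ * (τ - ε) ∧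
      σ + τ - 2 * ε < κ * (τ - 3 * ε) :=
    (eventually_lt_nhds hσ).and <| (eventually_lt_nhds hτ).and <|
      (ContinuousAt.eventually_lt (by fun_prop) (by fun_prop) (by simpa using hκτ)).and
      (ContinuousAt.eventually_lt (by fun_prop) (by fun_prop) (by simpa using hκτ))
  obtain ⟨ε, ⟨hεσ, hετ, hκt, hκw⟩, hε⟩ :=
    ((hε.filter_mono nhdsWithin_le_nhds).and (self_mem_nhdsWithin (s := Set.Ioi 0))).exists
  simp only [hl] at hlsup
  have hl_lt := eventually_lt_of_limsup_lt (hlsup.trans_lt (by linarith : -τ < -(τ - ε)))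
    (isBoundedUnder_le_of_limsup_neg (hlsup.trans_lt (neg_neg_of_pos hτ)))
  obtain ⟨B, hB⟩ := exists_bound_of_abs_sub_div_lt_rpow (κ := κ) hα
    (eventually_abs_le_exp_mul (hq.eventually (eventually_lt_nhds (lt_add_of_pos_right σ hε))))
    (eventually_exp_mul_le_abs (by linarith) (hq.eventually (eventually_gt_nhds (sub_lt_self σ hε))))
    (eventually_abs_le_exp_mul hl_lt) (by linarith) (by linarith) (by linarith) (by linarith)
  refine (finite_setOf_abs_sub_div_lt_one_and_le α B).subset fun ⟨a, b⟩ hab => ⟨?_, ?_⟩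
  · exact hab.trans_le (rpow_le_one_of_one_le_of_nonpos (Nat.one_le_cast.mpr b.pos)
      (by linarith [div_pos hσ hτ]))
  · exact hB a b b.pos hab
end

section
/- (Hata's lemma on non-quadraticity measure.) Let α be a real number that is not a root of any nonzero integer polynomial of degree at most 2, let σ, τ > 0, and let (p_n), (q_n), (r_n) be sequences of integers with l_n = q_n·α + p_n and m_n = q_n·α² + r_n. If lim_{n→∞} (1/n)·ln|q_n| = σ and max(limsup_{n→∞} (1/n)·ln|l_n|, limsup_{n→∞} (1/n)·ln|m_n|) ≤ −τ, then the non-quadraticity measure of α satisfies μ₂(α) ≤ 1 + σ/τ; that is, for every real κ > 1 + σ/τ, there exist only finitely many real algebraic numbers β of degree at most 2 with |α − β| < H(β)^(−κ). -/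
open Filter Polynomial Real

/-- The height of an integer polynomial: the largest absolute value of its coefficients. -/
def polyHeight (P : Polynomial ℤ) : ℕ :=
  P.support.sup fun i => (P.coeff i).natAbs

lemma limsup_ev {u : ℕ → ℝ} {τ δ : ℝ} (h : Filter.limsup u Filter.atTop ≤ -τ)
    (hτ : 0 < τ) (hδ : 0 < δ) : ∃ N : ℕ, ∀ n ≥ N, u n < -τ + δ := by
  by_cases hb : Filter.IsBoundedUnder (· ≤ ·) Filter.atTop u
  · have := Filter.eventually_lt_of_limsup_lt (lt_of_le_of_lt h (by linarith : -τ < -τ + δ)) hb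
    exact eventually_atTop.mp this
  · exfalso
    have hs : { a : ℝ | ∀ᶠ n in Filter.atTop, u n ≤ a } = ∅ := by
      ext a
      simp only [Set.mem_setOf_eq, Set.mem_empty_iff_false, iff_false]
      intro ha
      exact hb ⟨a, ha⟩
    rw [Filter.limsup_eq, hs, Real.sInf_empty] at h
    linarith

lemma quad_finite {a b c : ℝ} (h : ¬(a = 0 ∧ b = 0 ∧ c = 0)) :
    {x : ℝ | a*x^2 + b*x + c = 0}.Finite := by
  have hp : (C a * X^2 + C b * X + C c : ℝ[X]) ≠ 0 := by
    intro h0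
    apply h
    refine ⟨?_, ?_, ?_⟩
    · simpa using congrArg (fun p => Polynomial.coeff p 2) h0
    · simpa using congrArg (fun p => Polynomial.coeff p 1) h0
    · simpa using congrArg (fun p => Polynomial.coeff p 0) h0
  apply (Polynomial.finite_setOf_isRoot hp).subset
  intro x hx
  simp only [Set.mem_setOf_eq] at hx ⊢
  show Polynomial.IsRoot _ x
  simp [Polynomial.IsRoot]
  linarith [hx]

lemma aeval_deg2 (P : Polynomial ℤ) (h : P.natDegree ≤ 2) (x : ℝ) :
    Polynomial.aeval x P = (P.coeff 0 : ℝ) + (P.coeff 1 : ℝ) * x + (P.coeff 2 : ℝ) * x^2 := by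
  rw [Polynomial.aeval_eq_sum_range' (lt_of_le_of_lt h (by norm_num : (2:ℕ) < 3))]
  simp [Finset.sum_range_succ, zsmul_eq_mul]

lemma coeff_le_height (P : Polynomial ℤ) (i : ℕ) : (P.coeff i).natAbs ≤ polyHeight P := by
  by_cases hi : i ∈ P.support
  · exact Finset.le_sup (f := fun i => (P.coeff i).natAbs) hi
  · simp [Polynomial.notMem_support_iff.mp hi]

lemma one_le_height {P : Polynomial ℤ} (h : P ≠ 0) : 1 ≤ polyHeight P := by
  obtain ⟨i, hi⟩ := Polynomial.nonempty_support_iff.mpr h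
  have h1 : 1 ≤ (P.coeff i).natAbs := Int.natAbs_pos.mpr (Polynomial.mem_support_iff.mp hi)
  exact le_trans h1 (coeff_le_height P i)

set_option maxHeartbeats 2000000 in
theorem hata_non_quadraticity_measure (α : ℝ)
    (hα : ∀ P : Polynomial ℤ, P ≠ 0 → P.natDegree ≤ 2 → Polynomial.aeval α P ≠ 0)
    (σ τ : ℝ) (hσ : 0 < σ) (hτ : 0 < τ)
    (p q r : ℕ → ℤ) (l m : ℕ → ℝ)
    (hl : ∀ n, l n = (q n : ℝ) * α + (p n : ℝ))
    (hm : ∀ n, m n = (q n : ℝ) * α ^ 2 + (r n : ℝ))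
    (hq : Filter.Tendsto (fun n : ℕ => (1 / (n : ℝ)) * Real.log |(q n : ℝ)|)
      Filter.atTop (nhds σ))
    (hlsup : max (Filter.limsup (fun n : ℕ => (1 / (n : ℝ)) * Real.log |l n|) Filter.atTop)
        (Filter.limsup (fun n : ℕ => (1 / (n : ℝ)) * Real.log |m n|) Filter.atTop) ≤ -τ) :
    ∀ κ : ℝ, κ > 1 + σ / τ →
      {β : ℝ | ∃ P : Polynomial ℤ, Irreducible P ∧ P.natDegree ≤ 2 ∧
          Polynomial.aeval β P = 0 ∧
          |α - β| < ((polyHeight P : ℕ) : ℝ) ^ (-κ)}.Finite := by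
  classical
  intro κ hκ
  -- basic facts about κ
  have hκ1 : 1 < κ := by
    have h1 : 0 < σ/τ := div_pos hσ hτ
    linarith
  have hnum : 0 < (κ-1)*τ - σ := by
    have := (div_lt_iff₀ hτ).mp (show σ/τ < κ - 1 by linarith)
    linarith
  have hden : (0:ℝ) < 3*(κ-1)+1 := by nlinarith
  -- choice of δ
  set δ : ℝ := min (σ/2) (min (τ/6) (((κ-1)*τ - σ)/(3*(κ-1)+1)/2)) with hδdef
  have hδpos : 0 < δ := by
    apply lt_min (by linarith)
    exact lt_min (by linarith) (by positivity)
  have hδσ : δ < σ := lt_of_le_of_lt (min_le_left _ _) (by linarith)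
  have hδτ : 3*δ < τ := by
    have h1 : δ ≤ τ/6 := le_trans (min_le_right _ _) (min_le_left _ _)
    linarith
  have hkey : σ + δ < (κ-1)*(τ - 3*δ) := by
    have h2 : δ ≤ (((κ-1)*τ - σ)/(3*(κ-1)+1))/2 := le_trans (min_le_right _ _) (min_le_right _ _)
    rw [div_div] at h2
    have h4 := (le_div_iff₀ (by positivity : (0:ℝ) < (3*(κ-1)+1)*2)).mp h2
    nlinarith
  set σ₁ : ℝ := σ - δ with hσ₁def
  set σ₂ : ℝ := σ + δ with hσ₂def
  set τ₁ : ℝ := τ - δ with hτ₁def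
  set τ₃ : ℝ := τ - 3*δ with hτ₃def
  have hσ₁pos : 0 < σ₁ := by rw [hσ₁def]; linarith
  have hσ₂pos : 0 < σ₂ := by rw [hσ₂def]; linarith
  have hτ₁pos : 0 < τ₁ := by rw [hτ₁def]; linarith
  have hτ₃pos : 0 < τ₃ := by rw [hτ₃def]; linarith
  have hτ₃le : τ₃ ≤ τ₁ := by rw [hτ₃def, hτ₁def]; linarith
  have he : 0 < κ - 1 - σ₂/τ₃ := by
    have h1 : σ₂/τ₃ < κ - 1 := (div_lt_iff₀ hτ₃pos).mpr hkey
    linarith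
  clear_value δ σ₁ σ₂ τ₁ τ₃
  -- eventual bounds
  obtain ⟨Nq, hNq⟩ := Metric.tendsto_atTop.mp hq δ hδpos
  obtain ⟨Nl, hNl⟩ := limsup_ev (le_trans (le_max_left _ _) hlsup) hτ hδpos
  obtain ⟨Nm, hNm⟩ := limsup_ev (le_trans (le_max_right _ _) hlsup) hτ hδpos
  set N₁ : ℕ := max (max Nq (max Nl Nm)) 1 with hN₁def
  have hN₁1 : 1 ≤ N₁ := le_max_right _ _
  have hNqN₁ : Nq ≤ N₁ := le_trans (le_max_left _ _) (le_max_left _ _)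
  have hNlm : max Nl Nm ≤ N₁ := le_trans (le_max_right _ _) (le_max_left _ _)
  clear_value N₁
  have hnpos : ∀ n : ℕ, N₁ ≤ n → (0:ℝ) < (n:ℝ) := by
    intro n hn
    have : 1 ≤ n := le_trans hN₁1 hn
    exact_mod_cast this
  have hQb : ∀ n : ℕ, N₁ ≤ n → Real.exp (σ₁*n) ≤ |(q n:ℝ)| ∧ |(q n:ℝ)| ≤ Real.exp (σ₂*n) := by
    intro n hn
    have h0 : (0:ℝ) < n := hnpos n hn
    have h1 := hNq n (le_trans hNqN₁ hn)
    rw [Real.dist_eq] at h1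
    obtain ⟨h2, h3⟩ := abs_lt.mp h1
    have hL1 : σ₁*(n:ℝ) < Real.log |(q n:ℝ)| := by
      have := mul_lt_mul_of_pos_right (show σ - δ < (1/(n:ℝ)) * Real.log |(q n:ℝ)| by linarith) h0
      rw [one_div, inv_mul_eq_div, div_mul_cancel₀ _ (ne_of_gt h0)] at this
      rw [hσ₁def]; linarith
    have hL2 : Real.log |(q n:ℝ)| < σ₂*(n:ℝ) := by
      have := mul_lt_mul_of_pos_right (show (1/(n:ℝ)) * Real.log |(q n:ℝ)| < σ + δ by linarith) h0
      rw [one_div, inv_mul_eq_div, div_mul_cancel₀ _ (ne_of_gt h0)] at this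
      rw [hσ₂def]; linarith
    have hq0 : (0:ℝ) < |(q n:ℝ)| := by
      rcases eq_or_lt_of_le (abs_nonneg ((q n:ℝ))) with h|h
      · exfalso
        rw [← h, Real.log_zero] at hL1
        nlinarith
      · exact h
    constructor
    · calc Real.exp (σ₁*n) ≤ Real.exp (Real.log |(q n:ℝ)|) := Real.exp_le_exp.mpr hL1.le
        _ = |(q n:ℝ)| := Real.exp_log hq0
    · calc |(q n:ℝ)| = Real.exp (Real.log |(q n:ℝ)|) := (Real.exp_log hq0).symm
        _ ≤ Real.exp (σ₂*n) := Real.exp_le_exp.mpr hL2.le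
  have hsmall : ∀ (u : ℕ → ℝ) (N : ℕ), (∀ n ≥ N, (1/(n:ℝ)) * Real.log |u n| < -τ + δ) →
      ∀ n : ℕ, N₁ ≤ n → N ≤ n → |u n| ≤ Real.exp (-τ₁*n) := by
    intro u N hu n hn hn'
    have h0 : (0:ℝ) < n := hnpos n hn
    by_cases hz : u n = 0
    · simp [hz]
      positivity
    · have hpos : 0 < |u n| := abs_pos.mpr hz
      have h1 := hu n hn'
      have h2 : Real.log |u n| < (-τ+δ)*(n:ℝ) := by
        have := mul_lt_mul_of_pos_right h1 h0
        rw [one_div, inv_mul_eq_div, div_mul_cancel₀ _ (ne_of_gt h0)] at this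
        linarith
      have h3 : (-τ+δ)*(n:ℝ) = -τ₁*(n:ℝ) := by rw [hτ₁def]; ring
      calc |u n| = Real.exp (Real.log |u n|) := (Real.exp_log hpos).symm
        _ ≤ Real.exp (-τ₁*n) := Real.exp_le_exp.mpr (by rw [← h3]; linarith)
  have hlub : ∀ n : ℕ, N₁ ≤ n → |l n| ≤ Real.exp (-τ₁*n) := by
    intro n hn
    exact hsmall l Nl hNl n hn (le_trans (le_trans (le_max_left Nl Nm) hNlm) hn)
  have hmub : ∀ n : ℕ, N₁ ≤ n → |m n| ≤ Real.exp (-τ₁*n) := by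
    intro n hn
    exact hsmall m Nm hNm n hn (le_trans (le_trans (le_max_right Nl Nm) hNlm) hn)
  -- constants
  set c₁ : ℝ := 2*|α| + 2 with hc₁def
  have hc₁pos : (0:ℝ) < c₁ := by rw [hc₁def]; positivity
  have hc₁2 : (2:ℝ) ≤ c₁ := by rw [hc₁def]; nlinarith [abs_nonneg α]
  have hlog2 : (0:ℝ) ≤ Real.log 2 := Real.log_nonneg (by norm_num)
  have hlogc₁ : (0:ℝ) ≤ Real.log c₁ := Real.log_nonneg (by linarith)
  clear_value c₁
  set C₁ : ℝ := Real.log c₁ + Real.log 2 with hC₁def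
  set C₅ : ℝ := τ₃*((N₁:ℝ)+1) + Real.log 8 + 2*Real.log 2 + σ + τ with hC₅def
  set B : ℝ := (σ₂*C₅/τ₃ + C₁)/(κ - 1 - σ₂/τ₃) with hBdef
  set H₀ : ℕ := ⌈Real.exp B⌉₊ with hH₀def
  clear_value C₁ C₅ B H₀
  -- main height bound
  have hmain : ∀ P : Polynomial ℤ, Irreducible P → P.natDegree ≤ 2 → ∀ β : ℝ,
      Polynomial.aeval β P = 0 → |α - β| < ((polyHeight P : ℕ) : ℝ) ^ (-κ) →
      polyHeight P ≤ H₀ := by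
    intro P hirr hdeg β hroot happ
    set H : ℕ := polyHeight P with hHdef
    have hPne : P ≠ 0 := hirr.ne_zero
    have hH1 : 1 ≤ H := by rw [hHdef]; exact one_le_height hPne
    clear_value H
    have hH0R : (0:ℝ) < (H:ℝ) := by exact_mod_cast Nat.lt_of_lt_of_le Nat.zero_lt_one hH1
    have hH1R : (1:ℝ) ≤ (H:ℝ) := by exact_mod_cast hH1
    set LH : ℝ := Real.log (H:ℝ) with hLHdef
    have hLH0 : 0 ≤ LH := Real.log_nonneg hH1R
    have hHexp : (H:ℝ) = Real.exp LH := by rw [hLHdef]; exact (Real.exp_log hH0R).symm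
    clear_value LH
    have hcoeff : ∀ i, |(P.coeff i : ℝ)| ≤ (H:ℝ) := by
      intro i
      have h1 := coeff_le_height P i
      have h2 : ((P.coeff i).natAbs : ℝ) ≤ (H:ℝ) := by rw [hHdef]; exact_mod_cast h1
      rwa [Nat.cast_natAbs, Int.cast_abs] at h2
    have hcoeff' : ∀ i, ((P.coeff i).natAbs : ℤ) ≤ (polyHeight P : ℤ) := by
      intro i
      exact_mod_cast coeff_le_height P i
    set ar : ℝ := (P.coeff 2 : ℝ) with hardef
    set br : ℝ := (P.coeff 1 : ℝ) with hbrdef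
    set cr : ℝ := (P.coeff 0 : ℝ) with hcrdef
    have hc2' : |ar| ≤ (H:ℝ) := by rw [hardef]; exact hcoeff 2
    have hc1' : |br| ≤ (H:ℝ) := by rw [hbrdef]; exact hcoeff 1
    have hβeq : cr + br*β + ar*β^2 = 0 := by
      have h1 := aeval_deg2 P hdeg β
      rw [hroot] at h1
      linarith [h1]
    set A : ℝ := ar*α^2 + br*α + cr with hAdef
    have hA0 : A ≠ 0 := by
      have h1 := hα P hPne hdeg
      rw [aeval_deg2 P hdeg α] at h1
      intro h2
      apply h1
      rw [hAdef] at h2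
      linarith
    have hAabs : 0 < |A| := abs_pos.mpr hA0
    clear_value A
    have hκpos : (0:ℝ) < κ := by linarith
    have hrpow1 : ((H:ℕ):ℝ) ^ (-κ) ≤ 1 :=
      Real.rpow_le_one_of_one_le_of_nonpos hH1R (by linarith)
    have hzle1 : |α - β| ≤ 1 := le_of_lt (lt_of_lt_of_le happ hrpow1)
    have hβb : |β| ≤ |α| + 1 := by
      have h1 : |β| ≤ |α| + |α - β| := by
        calc |β| = |α - (α - β)| := by ring_nf
          _ ≤ |α| + |α - β| := abs_sub _ _
      linarith
    have hAub : |A| ≤ c₁*(H:ℝ)*|α - β| := by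
      have hfactor : A = (α - β)*(ar*(α+β)+br) := by
        rw [hAdef]; linear_combination hβeq
      rw [hfactor, abs_mul]
      have h2 : |ar*(α+β)+br| ≤ (H:ℝ)*c₁ := by
        calc |ar*(α+β)+br| ≤ |ar*(α+β)| + |br| := abs_add_le _ _
          _ = |ar| * |α+β| + |br| := by rw [abs_mul]
          _ ≤ (H:ℝ)*(|α|+|β|) + (H:ℝ) :=
              add_le_add (mul_le_mul hc2' (abs_add_le α β) (abs_nonneg _) (by positivity))
                hc1'
          _ ≤ (H:ℝ)*(|α| + (|α|+1)) + (H:ℝ) := by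
              have h6 : |α|+|β| ≤ |α| + (|α|+1) := by linarith
              have h7 := mul_le_mul_of_nonneg_left h6 (le_of_lt hH0R)
              linarith
          _ = (H:ℝ)*c₁ := by rw [hc₁def]; ring
      calc |α-β| * |ar*(α+β)+br| ≤ |α-β| * ((H:ℝ)*c₁) :=
            mul_le_mul_of_nonneg_left h2 (abs_nonneg _)
        _ = c₁*(H:ℝ)*|α - β| := by ring
    have hzrpow : |α - β| < Real.exp (LH * -κ) := by
      rw [hLHdef, ← Real.rpow_def_of_pos hH0R]
      exact happ
    -- threshold index
    set n₂ : ℕ := max N₁ ⌈Real.log (8*(H:ℝ)) / τ₁⌉₊ with hn₂def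
    have hn₂N₁ : N₁ ≤ n₂ := le_max_left _ _
    have hceiln₂ : ⌈Real.log (8*(H:ℝ)) / τ₁⌉₊ ≤ n₂ := le_max_right _ _
    have hn₂ub : n₂ ≤ N₁ + ⌈Real.log (8*(H:ℝ)) / τ₁⌉₊ :=
      max_le (Nat.le_add_right _ _) (Nat.le_add_left _ _)
    clear_value n₂
    have h8H : (0:ℝ) < 8*(H:ℝ) := by positivity
    have hlog8H : 0 ≤ Real.log (8*(H:ℝ)) := Real.log_nonneg (by linarith)
    have hthresh : ∀ n : ℕ, n₂ ≤ n → 2*(H:ℝ)*Real.exp (-τ₁*n) ≤ 1/4 := by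
      intro n hn
      have h1 : Real.log (8*(H:ℝ))/τ₁ ≤ (n:ℝ) := by
        have ha := Nat.le_ceil (Real.log (8*(H:ℝ))/τ₁)
        have hb : (⌈Real.log (8*(H:ℝ))/τ₁⌉₊ : ℝ) ≤ (n:ℝ) :=
          Nat.cast_le.mpr (le_trans hceiln₂ hn)
        linarith
      have h2 : Real.log (8*(H:ℝ)) ≤ τ₁*(n:ℝ) := by
        rw [div_le_iff₀ hτ₁pos] at h1
        linarith
      have h3 : 8*(H:ℝ) ≤ Real.exp (τ₁*n) := by
        rw [← Real.exp_log h8H]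
        exact Real.exp_le_exp.mpr h2
      have h4 : Real.exp (-(τ₁*(n:ℝ))) ≤ (8*(H:ℝ))⁻¹ := by
        rw [Real.exp_neg]
        exact inv_anti₀ h8H h3
      have h5 : -τ₁*(n:ℝ) = -(τ₁*(n:ℝ)) := by ring
      rw [h5]
      calc 2*(H:ℝ)*Real.exp (-(τ₁*(n:ℝ))) ≤ 2*(H:ℝ)*(8*(H:ℝ))⁻¹ :=
            mul_le_mul_of_nonneg_left h4 (by positivity)
        _ ≤ 1/4 := by
            rw [show 2*(H:ℝ)*(8*(H:ℝ))⁻¹ = (H:ℝ)/(H:ℝ)*(1/4) by field_simp; ring]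
            rw [div_self (ne_of_gt hH0R)]
            norm_num
    -- existence of a good index
    have hexists : ∃ n : ℕ, n₂ ≤ n ∧ 1/2 < |(q n : ℝ)| * |A| := by
      refine ⟨max n₂ (⌈Real.log (1/(2*|A|))/σ₁⌉₊ + 1), le_max_left _ _, ?_⟩
      set n : ℕ := max n₂ (⌈Real.log (1/(2*|A|))/σ₁⌉₊ + 1) with hndef
      have hnN₁ : N₁ ≤ n := le_trans hn₂N₁ (le_max_left _ _)
      have hnceil : (⌈Real.log (1/(2*|A|))/σ₁⌉₊ + 1 : ℕ) ≤ n := le_max_right _ _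
      clear_value n
      have h1 : Real.log (1/(2*|A|))/σ₁ < (n:ℝ) := by
        have ha := Nat.le_ceil (Real.log (1/(2*|A|))/σ₁)
        have hc : ((⌈Real.log (1/(2*|A|))/σ₁⌉₊ + 1 : ℕ) : ℝ) ≤ (n:ℝ) := Nat.cast_le.mpr hnceil
        push_cast at hc
        linarith
      have h2 : Real.log (1/(2*|A|)) < σ₁*(n:ℝ) := by
        rw [div_lt_iff₀ hσ₁pos] at h1
        linarith
      have h3 : 1/(2*|A|) < Real.exp (σ₁*n) := by
        rw [← Real.exp_log (show (0:ℝ) < 1/(2*|A|) by positivity)]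
        exact Real.exp_lt_exp.mpr h2
      calc 1/2 = (1/(2*|A|)) * |A| := by field_simp
        _ < Real.exp (σ₁*n) * |A| := mul_lt_mul_of_pos_right h3 hAabs
        _ ≤ |(q n : ℝ)| * |A| := mul_le_mul_of_nonneg_right (hQb n hnN₁).1 (abs_nonneg A)
    set nstar : ℕ := Nat.find hexists with hnstardef
    obtain ⟨hnstarn₂, hhalf⟩ : n₂ ≤ nstar ∧ 1/2 < |(q nstar : ℝ)| * |A| := by
      rw [hnstardef]; exact Nat.find_spec hexists
    have hmin : ∀ k : ℕ, k < nstar → ¬(n₂ ≤ k ∧ 1/2 < |(q k : ℝ)| * |A|) := by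
      intro k hk
      rw [hnstardef] at hk
      exact Nat.find_min hexists hk
    clear_value nstar
    have hnstarN₁ : N₁ ≤ nstar := le_trans hn₂N₁ hnstarn₂
    -- inequality (I)
    have hI : (κ-1)*LH < σ₂*(nstar:ℝ) + C₁ := by
      have h1 : |A| < c₁ * Real.exp (LH + LH * -κ) := by
        calc |A| ≤ c₁*(H:ℝ)*|α - β| := hAub
          _ < c₁*(H:ℝ)*Real.exp (LH * -κ) := by
              apply mul_lt_mul_of_pos_left hzrpow (by positivity)
          _ = c₁ * Real.exp (LH + LH * -κ) := by
              rw [hHexp, Real.exp_add]; ring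
      have h2 : 1/2 < Real.exp (σ₂*(nstar:ℝ)) * (c₁ * Real.exp (LH + LH * -κ)) := by
        calc 1/2 < |(q nstar : ℝ)| * |A| := hhalf
          _ ≤ Real.exp (σ₂*(nstar:ℝ)) * |A| :=
              mul_le_mul_of_nonneg_right (hQb nstar hnstarN₁).2 (abs_nonneg A)
          _ < Real.exp (σ₂*(nstar:ℝ)) * (c₁ * Real.exp (LH + LH * -κ)) :=
              mul_lt_mul_of_pos_left h1 (Real.exp_pos _)
      have h3 : Real.exp (σ₂*(nstar:ℝ)) * (c₁ * Real.exp (LH + LH * -κ))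
          = c₁ * Real.exp (σ₂*(nstar:ℝ) + (LH + LH * -κ)) := by
        rw [show Real.exp (σ₂*(nstar:ℝ)) * (c₁ * Real.exp (LH + LH * -κ))
          = c₁ * (Real.exp (σ₂*(nstar:ℝ)) * Real.exp (LH + LH * -κ)) from by ring,
          ← Real.exp_add]
      rw [h3] at h2
      have h4 := Real.log_lt_log (by norm_num : (0:ℝ) < 1/2) h2
      rw [Real.log_mul (ne_of_gt hc₁pos) (Real.exp_ne_zero _), Real.log_exp] at h4
      have h5 : Real.log (1/2) = -Real.log 2 := by
        rw [one_div, Real.log_inv]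
      rw [h5] at h4
      have h6 : (κ-1)*LH = -(LH + LH * -κ) := by ring
      rw [hC₁def]
      linarith
    -- inequality (II)
    have hII : τ₃*(nstar:ℝ) ≤ LH + C₅ := by
      have hlog8Hsplit : Real.log (8*(H:ℝ)) = Real.log 8 + LH := by
        rw [Real.log_mul (by norm_num) (ne_of_gt hH0R), hLHdef]
      have hlog8 : (0:ℝ) ≤ Real.log 8 := Real.log_nonneg (by norm_num)
      rcases eq_or_lt_of_le hnstarn₂ with hcase|hcase
      · -- nstar = n₂
        have hc : (nstar:ℝ) ≤ (N₁:ℝ) + (Real.log (8*(H:ℝ))/τ₁ + 1) := by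
          have h1 : (nstar:ℝ) ≤ (N₁:ℝ) + (⌈Real.log (8*(H:ℝ))/τ₁⌉₊ : ℝ) := by
            rw [← hcase]
            exact_mod_cast Nat.cast_le.mpr hn₂ub
          have h2 : (⌈Real.log (8*(H:ℝ))/τ₁⌉₊ : ℝ) < Real.log (8*(H:ℝ))/τ₁ + 1 :=
            Nat.ceil_lt_add_one (div_nonneg hlog8H (le_of_lt hτ₁pos))
          linarith
        have h4 : τ₃*(nstar:ℝ) ≤ τ₃*((N₁:ℝ)+1) + τ₃*(Real.log (8*(H:ℝ))/τ₁) := by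
          have h5 := mul_le_mul_of_nonneg_left hc (le_of_lt hτ₃pos)
          have h6 : τ₃*((N₁:ℝ) + (Real.log (8*(H:ℝ))/τ₁ + 1))
              = τ₃*((N₁:ℝ)+1) + τ₃*(Real.log (8*(H:ℝ))/τ₁) := by ring
          linarith [h5, h6]
        have h5 : τ₃*(Real.log (8*(H:ℝ))/τ₁) ≤ Real.log (8*(H:ℝ)) := by
          rw [mul_div_assoc', div_le_iff₀ hτ₁pos]
          have h7 := mul_le_mul_of_nonneg_left hτ₃le hlog8H
          have h8 : Real.log (8*(H:ℝ))*τ₃ = τ₃*Real.log (8*(H:ℝ)) := by ring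
          linarith [h7, h8]
        rw [hC₅def]
        linarith
      · -- n₂ < nstar
        set k : ℕ := nstar - 1 with hkdef
        have hk1 : 1 ≤ nstar := by omega
        have hkn₂ : n₂ ≤ k := by omega
        have hkN₁ : N₁ ≤ k := le_trans hn₂N₁ hkn₂
        have hklt : k < nstar := by omega
        have hkcast : (k:ℝ) = (nstar:ℝ) - 1 := by
          rw [hkdef]
          push_cast [Nat.cast_sub hk1]
          ring
        clear_value k
        have hQkA : |(q k : ℝ)| * |A| ≤ 1/2 := by
          by_contra hcon
          push_neg at hcon
          exact hmin k hklt ⟨hkn₂, hcon⟩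
        set Nk : ℤ := P.coeff 0 * q k - P.coeff 2 * r k - P.coeff 1 * p k with hNkdef
        have hpk : (p k : ℝ) = l k - (q k : ℝ)*α := by rw [hl k]; ring
        have hrk : (r k : ℝ) = m k - (q k : ℝ)*α^2 := by rw [hm k]; ring
        have hNid : (Nk:ℝ) = (q k : ℝ)*A - ar*(m k) - br*(l k) := by
          rw [hNkdef]
          push_cast
          rw [hpk, hrk, hAdef, hardef, hbrdef, hcrdef]
          ring
        clear_value Nk
        have hml : |ar*(m k) + br*(l k)| ≤ 2*(H:ℝ)*Real.exp (-τ₁*k) := by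
          have h1 := hlub k hkN₁
          have h2 := hmub k hkN₁
          have h3 : |ar| * |m k| ≤ (H:ℝ) * Real.exp (-τ₁*k) :=
            mul_le_mul hc2' h2 (abs_nonneg _) (le_of_lt hH0R)
          have h4 : |br| * |l k| ≤ (H:ℝ) * Real.exp (-τ₁*k) :=
            mul_le_mul hc1' h1 (abs_nonneg _) (le_of_lt hH0R)
          calc |ar*(m k) + br*(l k)| ≤ |ar*(m k)| + |br*(l k)| := abs_add_le _ _
            _ = |ar| * |m k| + |br| * |l k| := by rw [abs_mul, abs_mul]
            _ ≤ (H:ℝ) * Real.exp (-τ₁*k) + (H:ℝ) * Real.exp (-τ₁*k) := add_le_add h3 h4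
            _ = 2*(H:ℝ)*Real.exp (-τ₁*k) := by ring
        have hml4 : |ar*(m k) + br*(l k)| ≤ 1/4 := le_trans hml (hthresh k hkn₂)
        have hNabs : |(Nk:ℝ)| < 1 := by
          have h1 : (Nk:ℝ) = (q k : ℝ)*A - (ar*(m k) + br*(l k)) := by rw [hNid]; ring
          rw [h1]
          have h2 := abs_sub ((q k : ℝ)*A) (ar*(m k) + br*(l k))
          have h3 : |(q k : ℝ)*A| = |(q k : ℝ)| * |A| := abs_mul _ _
          calc |(q k : ℝ)*A - (ar*(m k) + br*(l k))|
              ≤ |(q k : ℝ)*A| + |ar*(m k) + br*(l k)| := abs_sub _ _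
            _ ≤ 1/2 + 1/4 := by rw [h3]; exact add_le_add hQkA hml4
            _ < 1 := by norm_num
        have hNk0 : Nk = 0 := by
          have h1 : |Nk| < 1 := by exact_mod_cast (by rwa [← Int.cast_abs] at hNabs :
            ((|Nk| : ℤ) : ℝ) < 1)
          exact Int.abs_lt_one_iff.mp h1
        have hqkA : |(q k : ℝ)| * |A| ≤ 2*(H:ℝ)*Real.exp (-τ₁*k) := by
          rw [← abs_mul]
          have h1 : (q k : ℝ)*A = ar*(m k) + br*(l k) := by
            rw [hNk0] at hNid
            push_cast at hNid
            linarith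
          rw [h1]
          exact hml
        -- combine
        have hstep : (1/2)*Real.exp (σ₁*(k:ℝ)) <
            Real.exp (σ₂*(nstar:ℝ)) * (2*Real.exp LH*Real.exp (-τ₁*(k:ℝ))) := by
          have hQkpos : (0:ℝ) < |(q k : ℝ)| := lt_of_lt_of_le (Real.exp_pos _) (hQb k hkN₁).1
          have h1 : (1/2)*|(q k : ℝ)| < (|(q nstar : ℝ)| * |A|) * |(q k : ℝ)| :=
            mul_lt_mul_of_pos_right hhalf hQkpos
          have h2 : (|(q nstar : ℝ)| * |A|) * |(q k : ℝ)|
              = |(q nstar : ℝ)| * (|(q k : ℝ)| * |A|) := by ring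
          have h3 : |(q nstar : ℝ)| * (|(q k : ℝ)| * |A|)
              ≤ Real.exp (σ₂*(nstar:ℝ)) * (2*(H:ℝ)*Real.exp (-τ₁*(k:ℝ))) :=
            mul_le_mul (hQb nstar hnstarN₁).2 hqkA
              (mul_nonneg (abs_nonneg _) (abs_nonneg _)) (le_of_lt (Real.exp_pos _))
          have h4 : (1/2)*Real.exp (σ₁*(k:ℝ)) ≤ (1/2)*|(q k : ℝ)| := by
            have := (hQb k hkN₁).1
            linarith
          have h5 : 2*(H:ℝ)*Real.exp (-τ₁*(k:ℝ)) = 2*Real.exp LH*Real.exp (-τ₁*(k:ℝ)) := by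
            rw [hHexp]
          calc (1/2)*Real.exp (σ₁*(k:ℝ)) ≤ (1/2)*|(q k : ℝ)| := h4
            _ < (|(q nstar : ℝ)| * |A|) * |(q k : ℝ)| := h1
            _ = |(q nstar : ℝ)| * (|(q k : ℝ)| * |A|) := h2
            _ ≤ Real.exp (σ₂*(nstar:ℝ)) * (2*(H:ℝ)*Real.exp (-τ₁*(k:ℝ))) := h3
            _ = Real.exp (σ₂*(nstar:ℝ)) * (2*Real.exp LH*Real.exp (-τ₁*(k:ℝ))) := by rw [h5]
        have hstep2 : (1/2)*Real.exp (σ₁*(k:ℝ)) <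
            2*Real.exp (σ₂*(nstar:ℝ) + LH + -τ₁*(k:ℝ)) := by
          calc (1/2)*Real.exp (σ₁*(k:ℝ)) <
              Real.exp (σ₂*(nstar:ℝ)) * (2*Real.exp LH*Real.exp (-τ₁*(k:ℝ))) := hstep
            _ = 2*Real.exp (σ₂*(nstar:ℝ) + LH + -τ₁*(k:ℝ)) := by
                rw [show Real.exp (σ₂*(nstar:ℝ)) * (2*Real.exp LH*Real.exp (-τ₁*(k:ℝ)))
                  = 2*(Real.exp (σ₂*(nstar:ℝ)) * Real.exp LH * Real.exp (-τ₁*(k:ℝ))) from by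
                    ring, ← Real.exp_add, ← Real.exp_add]
        have hlog := Real.log_lt_log (by positivity) hstep2
        rw [Real.log_mul (by norm_num) (Real.exp_ne_zero _), Real.log_exp,
          Real.log_mul (by norm_num) (Real.exp_ne_zero _), Real.log_exp] at hlog
        have hhalflog : Real.log (1/2) = -Real.log 2 := by rw [one_div, Real.log_inv]
        rw [hhalflog] at hlog
        have hsum : σ₁ + τ₁ - σ₂ = τ₃ := by
          rw [hσ₁def, hτ₁def, hσ₂def, hτ₃def]; ring
        rw [hkcast] at hlog
        have hsum' : σ₁*(nstar:ℝ) + τ₁*(nstar:ℝ) - σ₂*(nstar:ℝ) = τ₃*(nstar:ℝ) := by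
          rw [hσ₁def, hτ₁def, hσ₂def, hτ₃def]; ring
        have hσ₁le : σ₁ ≤ σ := by rw [hσ₁def]; linarith
        have hτ₁le : τ₁ ≤ τ := by rw [hτ₁def]; linarith
        have hτ₃N₁ : 0 ≤ τ₃*((N₁:ℝ)+1) := by positivity
        rw [hC₅def]
        linarith [hlog, hsum', hσ₁le, hτ₁le, hτ₃N₁, hlog8, hlog2]
    -- combine (I) and (II)
    have hnb : (nstar:ℝ) ≤ (LH + C₅)/τ₃ := (le_div_iff₀ hτ₃pos).mpr (by linarith [hII])
    have hσ₂n : σ₂*(nstar:ℝ) ≤ σ₂*((LH + C₅)/τ₃) :=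
      mul_le_mul_of_nonneg_left hnb (le_of_lt hσ₂pos)
    have hexpand : σ₂*((LH + C₅)/τ₃) = (σ₂/τ₃)*LH + σ₂*C₅/τ₃ := by
      field_simp
    have hLHe : (κ - 1 - σ₂/τ₃)*LH < σ₂*C₅/τ₃ + C₁ := by
      have h1 : (κ - 1 - σ₂/τ₃)*LH = (κ-1)*LH - (σ₂/τ₃)*LH := by ring
      linarith [hI, hσ₂n, hexpand]
    have hLHB : LH < B := by
      rw [hBdef, lt_div_iff₀ he]
      linarith [hLHe]
    have hHR : (H:ℝ) ≤ (H₀:ℝ) := by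
      have h1 : (H:ℝ) < Real.exp B := by
        rw [hHexp]
        exact Real.exp_lt_exp.mpr hLHB
      have h2 : Real.exp B ≤ (H₀:ℝ) := by
        rw [hH₀def]
        exact Nat.le_ceil _
      linarith
    exact_mod_cast hHR
  -- finite superset
  have hbig : (⋃ v ∈ ((Finset.Icc (-(H₀:ℤ)) (H₀:ℤ)) ×ˢ
      ((Finset.Icc (-(H₀:ℤ)) (H₀:ℤ)) ×ˢ (Finset.Icc (-(H₀:ℤ)) (H₀:ℤ))) : Finset (ℤ × ℤ × ℤ)),
      {x : ℝ | ¬(v.1 = 0 ∧ v.2.1 = 0 ∧ v.2.2 = 0) ∧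
        (v.1:ℝ)*x^2 + (v.2.1:ℝ)*x + (v.2.2:ℝ) = 0}).Finite := by
    apply Set.Finite.biUnion (Finset.finite_toSet _)
    intro v _
    by_cases hv : v.1 = 0 ∧ v.2.1 = 0 ∧ v.2.2 = 0
    · apply Set.Finite.subset Set.finite_empty
      intro x hx
      exact (hx.1 hv).elim
    · have hv' : ¬((v.1:ℝ) = 0 ∧ (v.2.1:ℝ) = 0 ∧ (v.2.2:ℝ) = 0) := by
        intro hc
        exact hv ⟨by exact_mod_cast hc.1, by exact_mod_cast hc.2.1, by exact_mod_cast hc.2.2⟩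
      apply (quad_finite hv').subset
      intro x hx
      exact hx.2
  apply hbig.subset
  intro β hβ
  obtain ⟨P, hirr, hdeg, hroot, happ⟩ := hβ
  have hHH₀ : polyHeight P ≤ H₀ := hmain P hirr hdeg β hroot happ
  have hPne : P ≠ 0 := hirr.ne_zero
  have hcb : ∀ i, -(H₀:ℤ) ≤ P.coeff i ∧ P.coeff i ≤ (H₀:ℤ) := by
    intro i
    have h1 : ((P.coeff i).natAbs : ℤ) ≤ (H₀ : ℤ) := by
      exact_mod_cast le_trans (coeff_le_height P i) hHH₀
    rw [← Int.abs_eq_natAbs] at h1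
    exact abs_le.mp h1
  have hmemT : ((P.coeff 2, (P.coeff 1, P.coeff 0)) : ℤ × ℤ × ℤ) ∈
      (((Finset.Icc (-(H₀:ℤ)) (H₀:ℤ)) ×ˢ
      ((Finset.Icc (-(H₀:ℤ)) (H₀:ℤ)) ×ˢ (Finset.Icc (-(H₀:ℤ)) (H₀:ℤ))) : Finset (ℤ × ℤ × ℤ)) :
      Set (ℤ × ℤ × ℤ)) := by
    refine Finset.mem_coe.mpr (Finset.mem_product.mpr ⟨Finset.mem_Icc.mpr ⟨(hcb 2).1, (hcb 2).2⟩, ?_⟩)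
    exact Finset.mem_product.mpr ⟨Finset.mem_Icc.mpr ⟨(hcb 1).1, (hcb 1).2⟩,
      Finset.mem_Icc.mpr ⟨(hcb 0).1, (hcb 0).2⟩⟩
  apply Set.mem_biUnion hmemT
  · refine ⟨?_, ?_⟩
    · intro hall
      obtain ⟨ha2, ha1, ha0⟩ := hall
      simp only at ha2 ha1 ha0
      apply hPne
      ext n
      rcases Nat.lt_or_ge n 3 with h|h
      · interval_cases n <;> simp [ha0, ha1, ha2]
      · rw [Polynomial.coeff_eq_zero_of_natDegree_lt (lt_of_le_of_lt hdeg (by omega))]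
        simp
    · have h1 := aeval_deg2 P hdeg β
      rw [hroot] at h1
      show (P.coeff 2 : ℝ)*β^2 + (P.coeff 1 : ℝ)*β + (P.coeff 0 : ℝ) = 0
      linarith [h1]
end

section
/- Let P be a polynomial with complex coefficients of degree d. Then for every complex number z with |z| < 1, the series −∑_{k=1}^∞ P(−k)·z^k converges and equals ∑_{j=0}^{d} c_j · (z/(z−1))^{j+1}, where c_j = ∑_{k=1}^{j+1} (−1)^{k−1} · P(−k) · C(j, k−1) and C(j, k−1) denotes the binomial coefficient. -/
/-!
Put `Q(x) = P(-(x + 1))`. Newton's forward-difference formula gives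
`Q(k) = ∑_{j ≤ d} C(k, j) Δʲ Q(0)`, the sum stopping at `d` because `Δᵈ⁺¹` kills polynomials of
degree `d`. Summing against `z^(k+1)` with `∑_k C(k, j) z^(k+1) = (z / (1 - z))^(j+1)` and writing
`z / (1 - z) = -(z / (z - 1))`, the coefficient of `(z / (z - 1))^(j+1)` is `(-1)ʲ Δʲ Q(0)`,
which is the alternating binomial sum `c_j`.
-/

open Finset Polynomial Function
open scoped fwdDiff

theorem hasSum_choose_mul_pow_succ {𝕜 : Type*} [NormedField 𝕜] [CompleteSpace 𝕜] (j : ℕ)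
    {z : 𝕜} (hz : ‖z‖ < 1) :
    HasSum (fun k : ℕ => (k.choose j : 𝕜) * z ^ (k + 1)) ((z / (1 - z)) ^ (j + 1)) := by
  refine (hasSum_nat_add_iff' j).1 ?_
  rw [sum_eq_zero fun i hi => by
    rw [Nat.choose_eq_zero_of_lt (mem_range.1 hi), Nat.cast_zero, zero_mul], sub_zero,
    div_pow, div_eq_mul_one_div, mul_comm]
  exact ((hasSum_choose_mul_geometric_of_norm_lt_one j hz).mul_right (z ^ (j + 1))).congr_fun
    fun n => by ring

theorem neg_one_pow_smul_fwdDiff_iter_eq_sum_shift {M G : Type*} [AddCommMonoid M]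
    [AddCommGroup G] (h : M) (f : M → G) (n : ℕ) (y : M) :
    (-1 : ℤ) ^ n • Δ_[h] ^[n] f y =
      ∑ k ∈ range (n + 1), ((-1 : ℤ) ^ k * n.choose k) • f (y + k • h) := by
  rw [fwdDiff_iter_eq_sum_shift, smul_sum]
  refine sum_congr rfl fun k hk => ?_
  obtain ⟨m, rfl⟩ := Nat.exists_eq_add_of_le (Nat.lt_succ_iff.1 (mem_range.1 hk))
  rw [smul_smul, ← mul_assoc, Nat.add_sub_cancel_left, pow_add, mul_assoc ((-1 : ℤ) ^ k),
    ← mul_pow, neg_one_mul, neg_neg, one_pow, mul_one]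

theorem Polynomial.eval_natCast_eq_sum_fwdDiff_iter {R : Type*} [CommRing R] (Q : R[X]) (k : ℕ) :
    Q.eval (k : R) = ∑ j ∈ range (Q.natDegree + 1), k.choose j • Δ_[1] ^[j] Q.eval 0 := by
  have hNewton := shift_eq_sum_fwdDiff_iter 1 Q.eval k 0
  rw [zero_add, nsmul_one] at hNewton
  rw [hNewton]
  have hsub {a b : ℕ} (hab : a ≤ b) : range (a + 1) ⊆ range (b + 1) := by simpa
  rw [sum_subset (hsub (Nat.le_add_right k Q.natDegree)) fun j _ hj => by
      rw [Nat.choose_eq_zero_of_lt (by simp at hj; omega), zero_smul],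
    ← sum_subset (hsub (Nat.le_add_left Q.natDegree k)) fun j _ hj => by
      rw [fwdDiff_iter_eq_zero_of_degree_lt (by simp at hj; omega), Pi.zero_apply, smul_zero]]

theorem nesterenko_polynomial_series (P : Polynomial ℂ) (d : ℕ) (hd : P.natDegree = d) :
    ∀ z : ℂ, ‖z‖ < 1 →
      HasSum (fun k : ℕ => -(P.eval (-((k : ℂ) + 1)) * z ^ (k + 1)))
        (∑ j ∈ Finset.range (d + 1),
          (∑ k ∈ Finset.range (j + 1),
              (-1 : ℂ) ^ k * P.eval (-((k : ℂ) + 1)) * (j.choose k : ℂ)) *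
            (z / (z - 1)) ^ (j + 1)) := by
  intro z hz
  set Q : ℂ[X] := P.comp (-(X + C 1))
  have hQ_eval (x : ℂ) : Q.eval x = P.eval (-(x + 1)) := by simp [Q]
  have hQ_deg : Q.natDegree = d := by
    rw [natDegree_comp, natDegree_neg, natDegree_X_add_C, mul_one, hd]
  have hcoef (j : ℕ) :
      ∑ k ∈ range (j + 1), (-1 : ℂ) ^ k * P.eval (-((k : ℂ) + 1)) * j.choose k =
        (-1) ^ j * Δ_[1] ^[j] Q.eval 0 := by
    simpa [zsmul_eq_mul, hQ_eval, mul_right_comm] using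
      (neg_one_pow_smul_fwdDiff_iter_eq_sum_shift 1 Q.eval j 0).symm
  have hw : z / (1 - z) = -(z / (z - 1)) := by rw [← div_neg, neg_sub]
  have hsum := hasSum_sum fun j (_ : j ∈ range (d + 1)) =>
    (hasSum_choose_mul_pow_succ j hz).mul_left (-Δ_[1] ^[j] Q.eval 0)
  rw [sum_congr rfl fun j _ => show _ = -Δ_[1] ^[j] Q.eval 0 * (z / (1 - z)) ^ (j + 1) by
    rw [hcoef, hw, neg_pow]; ring]
  refine hsum.congr_fun fun k => ?_
  rw [← hQ_eval, eval_natCast_eq_sum_fwdDiff_iter, hQ_deg, sum_mul, ← sum_neg_distrib]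
  refine sum_congr rfl fun j _ => ?_
  rw [nsmul_eq_mul]; ring
end
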